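/- arXiv:1702.03647 — 2 statements merged into one kernel-verified Lean document; each statement's English description precedes it below -/
import Mathlib

section
/- Let Σ = {a, b, c}. Suppose w = u·ab·y·ba·v and w' = u·ba·y·ab·v for words u, y, v over Σ. Then |w|_{abc} − |w'|_{abc} = |w|_{cba} − |w'|_{cba} = |y|_c, |w|_{bac} − |w'|_{bac} = |w|_{cab} − |w'|_{cab} = −|y|_c, and |w|_{acb} − |w'|_{acb} = |w|_{bca} − |w'|_{bca} = 0. -/
/-- The number of occurrences of `v` as a scattered subword (subsequence) of `w`. -/
def lcount (v w : List (Fin 3)) : ℕ := w.sublists.count v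

/-- The letters of the ternary alphabet `Σ = {a, b, c}`. -/
def A : Fin 3 := 0
def B : Fin 3 := 1
def C : Fin 3 := 2

/-- `w` and `w'` are M-equivalent with respect to the ordered alphabet `{x < y < z}`:
they have the same Parikh matrix, equivalently the same scattered-subword counts for
`x, y, z, xy, yz, xyz`. -/
def Mequiv (x y z : Fin 3) (w w' : List (Fin 3)) : Prop :=
  lcount [x] w = lcount [x] w' ∧ lcount [y] w = lcount [y] w' ∧
  lcount [z] w = lcount [z] w' ∧ lcount [x, y] w = lcount [x, y] w' ∧
  lcount [y, z] w = lcount [y, z] w' ∧ lcount [x, y, z] w = lcount [x, y, z] w'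

/-- Strong M-equivalence: M-equivalence with respect to every ordering of `{a, b, c}`. -/
def StrongME (w w' : List (Fin 3)) : Prop :=
  ∀ x y z : Fin 3, [x, y, z].Perm [A, B, C] → Mequiv x y z w w'

/-- `t`-fold repetition of the word `l`. -/
def lpow (l : List (Fin 3)) (n : ℕ) : List (Fin 3) := (List.replicate n l).flatten

/-!
Splitting each occurrence of a subword of length at most three between the two factors of a
concatenation gives the Parikh-matrix product rule. Expanding `w` and `w'` with it, everything
cancels except the counts inside the middle factors `ab·y·ba` and `ba·y·ab`, because these have the
same subword counts of length at most two. Inside them, the only occurrences that differ are those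
taking two letters from one swapped block and a `c` from `y`, which gives `±|y|_c`.
-/

namespace List

variable {α : Type*} [DecidableEq α]

theorem count_cons_map_cons (d c : α) (t : List α) (L : List (List α)) :
    (L.map (cons c)).count (d :: t) = if d = c then L.count t else 0 := by
  split_ifs with h
  · subst h
    exact count_map_of_injective _ _ cons_injective t
  · exact count_eq_zero.2 (by simp [Ne.symm h])

theorem count_nil_sublists (l : List α) : l.sublists.count [] = 1 := by
  rw [(sublists_perm_sublists' l).count_eq]
  induction l with
  | nil => simp
  | cons a l ih => simp [sublists'_cons, count_append, ih, count_eq_zero]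

theorem count_cons_sublists_cons (d c : α) (t w : List α) :
    (c :: w).sublists.count (d :: t) =
      w.sublists.count (d :: t) + if d = c then w.sublists.count t else 0 := by
  simp only [(sublists_perm_sublists' _).count_eq, sublists'_cons, count_append,
    count_cons_map_cons]

theorem count_singleton_sublists (x : α) (l : List α) : l.sublists.count [x] = l.count x := by
  induction l with
  | nil => simp
  | cons c l ih =>
    by_cases h : x = c
    · subst h
      simp [count_cons_sublists_cons, ih, count_nil_sublists]
    · simp [count_cons_sublists_cons, ih, h, Ne.symm h]

theorem count_pair_sublists_append (x y : α) (l₁ l₂ : List α) :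
    (l₁ ++ l₂).sublists.count [x, y] =
      l₁.sublists.count [x, y] + l₁.count x * l₂.count y + l₂.sublists.count [x, y] := by
  induction l₁ with
  | nil => simp
  | cons c l₁ ih =>
    simp only [cons_append, count_cons_sublists_cons, ih, count_singleton_sublists, count_append,
      count_cons]
    by_cases h : x = c
    · simp only [h, ↓reduceIte, BEq.rfl]
      ring
    · simp [h, Ne.symm h]

theorem count_triple_sublists_append (x y z : α) (l₁ l₂ : List α) :
    (l₁ ++ l₂).sublists.count [x, y, z] =
      l₁.sublists.count [x, y, z] + l₁.sublists.count [x, y] * l₂.count z +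
        l₁.count x * l₂.sublists.count [y, z] + l₂.sublists.count [x, y, z] := by
  induction l₁ with
  | nil => simp
  | cons c l₁ ih =>
    simp only [cons_append, count_cons_sublists_cons, ih, count_pair_sublists_append,
      count_singleton_sublists, count_cons]
    by_cases h : x = c
    · simp only [h, ↓reduceIte, BEq.rfl]
      ring
    · simp [h, Ne.symm h]

end List

theorem change_in_counts (u y v : List (Fin 3))
    (w w' : List (Fin 3))
    (hw : w = u ++ [A, B] ++ y ++ [B, A] ++ v)
    (hw' : w' = u ++ [B, A] ++ y ++ [A, B] ++ v) :
    (lcount [A, B, C] w : ℤ) - lcount [A, B, C] w' = (y.count C : ℤ) ∧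
    (lcount [C, B, A] w : ℤ) - lcount [C, B, A] w' = (y.count C : ℤ) ∧
    (lcount [B, A, C] w : ℤ) - lcount [B, A, C] w' = -(y.count C : ℤ) ∧
    (lcount [C, A, B] w : ℤ) - lcount [C, A, B] w' = -(y.count C : ℤ) ∧
    (lcount [A, C, B] w : ℤ) - lcount [A, C, B] w' = 0 ∧
    (lcount [B, C, A] w : ℤ) - lcount [B, C, A] w' = 0 := by
  subst hw hw'
  simp only [lcount, List.count_triple_sublists_append, List.count_pair_sublists_append,
    List.count_append]
  refine ⟨?_, ?_, ?_, ?_, ?_, ?_⟩ <;> simp [A, B, C, List.count_cons_sublists_cons] <;> ring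
end

section
/- Let Σ = {a, b, c} and t ≥ 1. The words w = (abcbabacab)^t and w' = (bacababcba)^t are strongly M-equivalent. -/
/-! The counts of `x, y, z, xy, yz, xyz` in `u ++ v` are polynomials in their counts in `u` and
in `v` (the Parikh matrix is a morphism), so M-equivalence with respect to a fixed ordering is a
congruence for concatenation. Hence it suffices to check strong M-equivalence of the
two blocks of length 10, which is a finite computation. -/

lemma lcount_eq_count_sublists' (v w : List (Fin 3)) : lcount v w = w.sublists'.count v :=
  (List.sublists_perm_sublists' w).count_eq v

@[simp] lemma lcount_nil_left (w : List (Fin 3)) : lcount [] w = 1 := by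
  rw [lcount_eq_count_sublists']
  induction w with
  | nil => rfl
  | cons a w ih =>
    simp only [List.sublists'_cons, List.count_append, ih, Nat.add_eq_left]
    exact List.count_eq_zero.2 (by simp)

@[simp] lemma lcount_cons_nil (x : Fin 3) (v : List (Fin 3)) : lcount (x :: v) [] = 0 := by
  simp [lcount]

lemma lcount_cons_cons (x a : Fin 3) (v w : List (Fin 3)) :
    lcount (x :: v) (a :: w) = lcount (x :: v) w + if x = a then lcount v w else 0 := by
  simp only [lcount_eq_count_sublists', List.sublists'_cons, List.count_append]
  congr 1
  split_ifs with h
  · subst h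
    exact List.count_map_of_injective _ _ List.cons_injective _
  · exact List.count_eq_zero.2 (by simp [Ne.symm h])

lemma lcount_singleton_append (x : Fin 3) (u v : List (Fin 3)) :
    lcount [x] (u ++ v) = lcount [x] u + lcount [x] v := by
  induction u with
  | nil => simp
  | cons a u ih =>
    simp only [List.cons_append, lcount_cons_cons, lcount_nil_left, ih]
    split <;> omega

lemma lcount_pair_append (x y : Fin 3) (u v : List (Fin 3)) :
    lcount [x, y] (u ++ v) = lcount [x, y] u + lcount [x, y] v + lcount [x] u * lcount [y] v := by
  induction u with
  | nil => simp
  | cons a u ih =>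
    simp only [List.cons_append, lcount_cons_cons, lcount_nil_left, ih, lcount_singleton_append]
    split <;> ring

lemma lcount_triple_append (x y z : Fin 3) (u v : List (Fin 3)) :
    lcount [x, y, z] (u ++ v) = lcount [x, y, z] u + lcount [x, y, z] v +
      lcount [x] u * lcount [y, z] v + lcount [x, y] u * lcount [z] v := by
  induction u with
  | nil => simp
  | cons a u ih =>
    simp only [List.cons_append, lcount_cons_cons, lcount_nil_left, ih, lcount_pair_append]
    split <;> ring

theorem Mequiv.append {x y z : Fin 3} {u u' v v' : List (Fin 3)} (hu : Mequiv x y z u u')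
    (hv : Mequiv x y z v v') : Mequiv x y z (u ++ v) (u' ++ v') := by
  obtain ⟨ux, uy, uz, uxy, uyz, uxyz⟩ := hu
  obtain ⟨vx, vy, vz, vxy, vyz, vxyz⟩ := hv
  simp only [Mequiv, lcount_singleton_append, lcount_pair_append, lcount_triple_append, *,
    and_self]

lemma lpow_succ (l : List (Fin 3)) (n : ℕ) : lpow l (n + 1) = l ++ lpow l n := by
  simp [lpow, List.replicate_succ]

theorem Mequiv.lpow {x y z : Fin 3} {u v : List (Fin 3)} (h : Mequiv x y z u v) (n : ℕ) :
    Mequiv x y z (lpow u n) (lpow v n) := by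
  induction n with
  | zero => exact ⟨rfl, rfl, rfl, rfl, rfl, rfl⟩
  | succ n ih =>
    rw [lpow_succ, lpow_succ]
    exact h.append ih

theorem StrongME.lpow {u v : List (Fin 3)} (h : StrongME u v) (n : ℕ) :
    StrongME (lpow u n) (lpow v n) :=
  fun x y z hp => (h x y z hp).lpow n

theorem strongME_abcbabacab_bacababcba :
    StrongME [A, B, C, B, A, B, A, C, A, B] [B, A, C, A, B, A, B, C, B, A] := by
  intro x y z hp
  fin_cases x <;> fin_cases y <;> fin_cases z <;> first
    | exact absurd hp (by decide)
    | simp [Mequiv, lcount_cons_cons, A, B, C]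

theorem power_words_strongME_general (t : ℕ) :
    StrongME (lpow [A, B, C, B, A, B, A, C, A, B] t)
             (lpow [B, A, C, A, B, A, B, C, B, A] t) :=
  strongME_abcbabacab_bacababcba.lpow t

theorem power_words_strongME (t : ℕ) (ht : 1 ≤ t) :
    StrongME (lpow [A, B, C, B, A, B, A, C, A, B] t)
             (lpow [B, A, C, A, B, A, B, C, B, A] t) :=
  power_words_strongME_general t
end
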